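/- arXiv:1209.0855 — 4 statements merged into one kernel-verified Lean document; each statement's English description precedes it below -/
import Mathlib

section
/- Let F be a field and F ∈ F[x₁,…,xₙ] a polynomial of total degree at most d₁+d₂+⋯+dₙ. For arbitrary subsets A₁,…,Aₙ of F with |Aᵢ| = dᵢ+1, the coefficient of the monomial x₁^{d₁}⋯xₙ^{dₙ} in F equals the sum over all (c₁,…,cₙ) ∈ A₁×⋯×Aₙ of F(c₁,…,cₙ)/(φ₁'(c₁)⋯φₙ'(cₙ)), where φᵢ(z) = ∏_{a∈Aᵢ}(z−a). -/
/-!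
Lagrange interpolation on the `#A` nodes of `A` reproduces every polynomial `p` of
degree `< #A`; comparing coefficients of `X ^ (#A - 1)` gives
`p.coeff (#A - 1) = ∑ a ∈ A, p(a) / φ'(a)`, because `φ'(a) = ∏_{b ≠ a} (a - b)`.
For `p = X ^ k` the sum is `1` if `k + 1 = #A` and `0` otherwise. In several variables the
sum over `A₁ × ⋯ × Aₙ` of a monomial `x ^ m` factors into these one-variable sums, and
`|m| ≤ |d|` forces either `m = d` or `mᵢ < dᵢ` for some `i`, so only the coefficient of
`x ^ d` survives.
-/

open Finset Polynomial

section OneVariable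

variable {F : Type*} [Field F]

theorem Polynomial.coeff_card_sub_one_eq_sum_eval_div_eval_derivative (A : Finset F) {p : F[X]}
    (hp : p.degree < #A) :
    p.coeff (#A - 1) = ∑ a ∈ A, eval a p / eval a (derivative (∏ b ∈ A, (X - C b))) := by
  classical
  rw [Lagrange.coeff_eq_sum (v := id) (Set.injOn_id _) hp]
  refine sum_congr rfl fun a ha => ?_
  have h := Lagrange.eval_nodal_derivative_eval_node_eq (v := id) ha
  rw [Lagrange.nodal_eq, Lagrange.eval_nodal] at h
  rw [← h]
  rfl

theorem sum_pow_div_eval_derivative (A : Finset F) {k : ℕ} (hk : k < #A) :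
    ∑ a ∈ A, a ^ k / eval a (derivative (∏ b ∈ A, (X - C b))) =
      if k + 1 = #A then 1 else 0 := by
  have hdeg : (X ^ k : F[X]).degree < #A := by
    rw [degree_X_pow]; exact_mod_cast hk
  have h := coeff_card_sub_one_eq_sum_eval_div_eval_derivative A hdeg
  simp only [eval_pow, eval_X, coeff_X_pow] at h
  rw [← h]
  exact if_congr (by omega) rfl rfl

end OneVariable

section SeveralVariables

variable {F σ : Type*} [Field F] [Fintype σ] [DecidableEq σ]

theorem sum_piFinset_prod_pow_div_eval_derivative (A : σ → Finset F) (m d : σ →₀ ℕ)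
    (hA : ∀ i, #(A i) = d i + 1) (hm : ∑ i, m i ≤ ∑ i, d i) :
    ∑ c ∈ Fintype.piFinset A, (∏ i, c i ^ m i) /
        ∏ i, eval (c i) (derivative (∏ a ∈ A i, (X - C a))) =
      if m = d then 1 else 0 := by
  simp_rw [← prod_div_distrib]
  rw [← prod_univ_sum (t := A)
    (f := fun i a => a ^ m i / eval a (derivative (∏ b ∈ A i, (X - C b))))]
  split_ifs with hmd
  · subst hmd
    refine prod_eq_one fun i _ => ?_
    rw [sum_pow_div_eval_derivative _ (by rw [hA i]; omega), if_pos (hA i).symm]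
  · obtain ⟨j, hj⟩ : ∃ j, m j < d j := by
      by_contra! hle
      have hlt : (d : σ → ℕ) < m :=
        lt_of_le_of_ne hle fun h => hmd (DFunLike.coe_injective h).symm
      exact (Fintype.sum_strictMono hlt).not_ge hm
    refine prod_eq_zero (mem_univ j) ?_
    rw [sum_pow_div_eval_derivative _ (by rw [hA j]; omega), if_neg (by rw [hA j]; omega)]

theorem coeff_eq_sum_piFinset_eval_div_eval_derivative (f : MvPolynomial σ F)
    (d : σ →₀ ℕ) (hdeg : f.totalDegree ≤ ∑ i, d i) (A : σ → Finset F)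
    (hA : ∀ i, #(A i) = d i + 1) :
    f.coeff d = ∑ c ∈ Fintype.piFinset A,
      MvPolynomial.eval c f / ∏ i, eval (c i) (derivative (∏ a ∈ A i, (X - C a))) := by
  have hsupp : ∀ m ∈ f.support, ∑ i, m i ≤ ∑ i, d i := fun m hm =>
    (Finsupp.sum_fintype _ _ fun _ => rfl).symm.trans_le
      ((MvPolynomial.le_totalDegree hm).trans hdeg)
  calc f.coeff d = ∑ m ∈ f.support, f.coeff m * if m = d then 1 else 0 := by simp
    _ = ∑ m ∈ f.support, f.coeff m * ∑ c ∈ Fintype.piFinset A, (∏ i, c i ^ m i) /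
          ∏ i, eval (c i) (derivative (∏ a ∈ A i, (X - C a))) :=
        sum_congr rfl fun m hm => by
          rw [sum_piFinset_prod_pow_div_eval_derivative A m d hA (hsupp m hm)]
    _ = _ := by
        simp_rw [mul_sum, MvPolynomial.eval_eq', sum_div, mul_div_assoc]
        exact sum_comm

end SeveralVariables

theorem lagrange_interpolation_lemma_general {F : Type*} [Field F] (n : ℕ)
    (d : Fin n → ℕ) (f : MvPolynomial (Fin n) F)
    (hdeg : f.totalDegree ≤ ∑ i, d i)
    (A : Fin n → Finset F) (hA : ∀ i, (A i).card = d i + 1) :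
    MvPolynomial.coeff (Finsupp.equivFunOnFinite.symm d) f =
      ∑ c ∈ Fintype.piFinset A,
        MvPolynomial.eval c f /
          ∏ i, Polynomial.eval (c i)
            (Polynomial.derivative (∏ a ∈ A i, (Polynomial.X - Polynomial.C a))) :=
  coeff_eq_sum_piFinset_eval_div_eval_derivative f _ (by simpa using hdeg) A (by simpa using hA)

/-- The multivariate Lagrange interpolation lemma of Lasoń and Karasev–Petrov:
if `deg f ≤ d₁ + ⋯ + dₙ` and `|Aᵢ| = dᵢ + 1`, then the coefficient of
`∏ xᵢ^{dᵢ}` in `f` equals `∑_{c ∈ A₁×⋯×Aₙ} f(c)/∏ᵢ φᵢ'(cᵢ)` where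
`φᵢ(z) = ∏_{a∈Aᵢ} (z − a)`. -/
theorem lagrange_interpolation_lemma {F : Type*} [Field F] (n : ℕ) (hn : 1 ≤ n)
    (d : Fin n → ℕ) (f : MvPolynomial (Fin n) F)
    (hdeg : f.totalDegree ≤ ∑ i, d i)
    (A : Fin n → Finset F) (hA : ∀ i, (A i).card = d i + 1) :
    MvPolynomial.coeff (Finsupp.equivFunOnFinite.symm d) f =
      ∑ c ∈ Fintype.piFinset A,
        MvPolynomial.eval c f /
          ∏ i, Polynomial.eval (c i)
            (Polynomial.derivative (∏ a ∈ A i, (Polynomial.X - Polynomial.C a))) :=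
  lagrange_interpolation_lemma_general n d f hdeg A hA
end

section
/- For variables u₁,…,uₘ in a field (with all relevant denominators nonzero), the identity ∑_{w∈𝔖ₘ} w(∏_{i=1}^m (1−uᵢ)/(1−u₁⋯uᵢ)) · ∏_{(i,j)∈R(w)} u_j = 1 holds, where w acts by permuting the variables uᵢ ↦ u_{w(i)}, and R(w) = {(w(j),w(i)) : 1 ≤ i < j ≤ m, w(i) > w(j)} is the inversion set of w⁻¹. -/
/-!
Induct on `m`, splitting `w ∈ 𝔖ₘ₊₁` by its last value `k = w(m+1)`. Relabelling the other values
monotonically gives `σ ∈ 𝔖ₘ`: the prefix products of `w` are those of `σ` acting on `u` with `u_k`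
deleted, except the last one, which is `u₁⋯uₘ₊₁`; and `R(w)` is `R(σ)` relabelled together with
the pairs `(k, v)`, `v > k`. So the summand of `w` is the summand of `σ` times
`(1 - u_k) / (1 - u₁⋯uₘ₊₁) · ∏_{v > k} u_v`. Summing over `σ` gives `1` by induction, and the
remaining sum over `k` telescopes to `1`.
-/

open Finset

/-- `R(w) = {(w(j),w(i)) : i < j, w(i) > w(j)}`, the inversion set of `w⁻¹`. -/
def Rset {m : ℕ} (w : Equiv.Perm (Fin m)) : Finset (Fin m × Fin m) :=
  Finset.univ.filter (fun p => p.1 < p.2 ∧ w.symm p.2 < w.symm p.1)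

theorem Finset.sum_one_sub_mul_prod_gt {R ι : Type*} [CommRing R] [LinearOrder ι]
    (s : Finset ι) (u : ι → R) :
    ∑ i ∈ s, (1 - u i) * ∏ j ∈ s with i < j, u j = 1 - ∏ i ∈ s, u i := by
  have := prod_add_ordered s u (1 - u)
  simp only [Pi.sub_apply, Pi.one_apply, add_sub_cancel, prod_const_one, mul_one] at this
  exact eq_sub_of_add_eq' this.symm

namespace Fin

variable {m : ℕ}

/-- The permutation with last value `k` whose other values are those of `σ`, moved
order-preservingly into `Fin (m + 1) \ {k}`. -/
def permSnoc (k : Fin (m + 1)) (σ : Equiv.Perm (Fin m)) : Equiv.Perm (Fin (m + 1)) :=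
  (finSuccEquiv' (last m)).trans ((Equiv.optionCongr σ).trans (finSuccEquiv' k).symm)

variable (k : Fin (m + 1)) (σ : Equiv.Perm (Fin m))

@[simp] theorem permSnoc_last : permSnoc k σ (last m) = k := by simp [permSnoc]

@[simp] theorem permSnoc_castSucc (j : Fin m) :
    permSnoc k σ j.castSucc = k.succAbove (σ j) := by
  simp [permSnoc, finSuccEquiv'_last_apply_castSucc]

@[simp] theorem permSnoc_symm_self : (permSnoc k σ).symm k = last m := by
  rw [Equiv.symm_apply_eq, permSnoc_last]

@[simp] theorem permSnoc_symm_succAbove (j : Fin m) :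
    (permSnoc k σ).symm (k.succAbove j) = (σ.symm j).castSucc := by
  rw [Equiv.symm_apply_eq, permSnoc_castSucc, Equiv.apply_symm_apply]

theorem bijective_uncurry_permSnoc :
    Function.Bijective (Function.uncurry (permSnoc (m := m))) := by
  rw [Fintype.bijective_iff_injective_and_card]
  refine ⟨?_, by simp [Fintype.card_perm, Nat.factorial_succ]⟩
  rintro ⟨k, σ⟩ ⟨k', σ'⟩ h
  have hk : k = k' := by simpa using congr($h (last m))
  subst hk
  have hσ : σ = σ' := Equiv.ext fun j => by simpa using congr($h (castSucc j))
  rw [hσ]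

theorem prod_Rset_permSnoc {M : Type*} [CommMonoid M] (f : Fin (m + 1) → M) :
    ∏ p ∈ Rset (permSnoc k σ), f p.2 =
      (∏ p ∈ Rset σ, f (k.succAbove p.2)) * ∏ v with k < v, f v := by
  simp only [Rset, prod_filter, Fintype.prod_prod_type]
  rw [prod_univ_succAbove _ k]
  simp [prod_univ_succAbove _ k, not_lt.2 (le_last _), mul_comm]

end Fin

open Fin

def permWeight {F : Type*} [Field F] {m : ℕ} (u : Fin m → F) (w : Equiv.Perm (Fin m)) : F :=
  (∏ i, (1 - u (w i)) / (1 - ∏ j ≤ i, u (w j))) * ∏ p ∈ Rset w, u p.2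

theorem permWeight_permSnoc {F : Type*} [Field F] {m : ℕ} (u : Fin (m + 1) → F)
    (k : Fin (m + 1)) (σ : Equiv.Perm (Fin m)) :
    permWeight u (permSnoc k σ) =
      permWeight (fun i => u (k.succAbove i)) σ *
        ((1 - u k) / (1 - ∏ v, u v) * ∏ v with k < v, u v) := by
  have hlast : ∏ j ≤ last m, u (permSnoc k σ j) = ∏ v, u v := by
    rw [← top_eq_last, Iic_top, Equiv.prod_comp (permSnoc k σ) u]
  rw [permWeight, permWeight, prod_Rset_permSnoc, prod_univ_castSucc, permSnoc_last, hlast]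
  simp only [permSnoc_castSucc, prod_Iic_castSucc]
  ring

theorem sum_permWeight_eq_one {F : Type*} [Field F] {m : ℕ} (u : Fin m → F)
    (hu : ∀ S : Finset (Fin m), S.Nonempty → ∏ i ∈ S, u i ≠ 1) :
    ∑ w, permWeight u w = 1 := by
  induction m with
  | zero => simp [permWeight, Rset]
  | succ m ih =>
    have hu_succAbove (k : Fin (m + 1)) (S : Finset (Fin m)) (hS : S.Nonempty) :
        ∏ i ∈ S, u (k.succAbove i) ≠ 1 := by
      simpa [prod_map] using hu (S.map k.succAboveEmb) hS.map
    have hP : 1 - ∏ v, u v ≠ 0 := sub_ne_zero.2 (hu univ univ_nonempty).symm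
    rw [← bijective_uncurry_permSnoc.sum_comp, Fintype.sum_prod_type]
    simp only [Function.uncurry_apply_pair, permWeight_permSnoc, ← sum_mul,
      ih _ (hu_succAbove _), one_mul]
    simp only [div_mul_eq_mul_div, ← sum_div, sum_one_sub_mul_prod_gt, div_self hP]

/-- `∑_{w∈𝔖ₘ} w(∏ᵢ (1−uᵢ)/(1−u₁⋯uᵢ)) ∏_{(i,j)∈R(w)} u_j = 1`. -/
theorem perm_sum_one {F : Type*} [Field F] (m : ℕ) (u : Fin m → F)
    (hu : ∀ S : Finset (Fin m), S.Nonempty → ∏ i ∈ S, u i ≠ 1) :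
    ∑ w : Equiv.Perm (Fin m),
      (∏ i, (1 - u (w i)) / (1 - ∏ j ∈ Finset.univ.filter (· ≤ i), u (w j)))
        * ∏ p ∈ Rset w, u p.2 = 1 := by
  simpa only [permWeight, filter_ge_eq_Iic] using sum_permWeight_eq_one u hu
end

section
/- Let S ⊆ {(i,j) : 1 ≤ i < j ≤ n}, and define d_j = |{i : (i,j)∈S}|, e_i = |{j : (i,j)∈S}|, ℓ_i = (n−i) + d_i − e_i, and let K = K(S) be the largest nonnegative integer k such that for every 0 ≤ j < k there is exactly one i with ℓ_i = j. Then no index i satisfies ℓ_i = K. -/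
open Finset

/-- The column sums `d_j = #{i : (i,j) ∈ S}`. -/
def dS {n : ℕ} (S : Finset (Fin n × Fin n)) (j : Fin n) : ℕ :=
  (S.filter (fun p => p.2 = j)).card

/-- The row sums `e_i = #{j : (i,j) ∈ S}`. -/
def eS {n : ℕ} (S : Finset (Fin n × Fin n)) (i : Fin n) : ℕ :=
  (S.filter (fun p => p.1 = i)).card

/-- `ℓ_i = (n − i) + d_i − e_i` (with `i` running through `1,…,n`;
here `i : Fin n` is 0-indexed, so `n − i` becomes `n − 1 − i`). -/
def ellS {n : ℕ} (S : Finset (Fin n × Fin n)) (i : Fin n) : ℤ :=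
  ((n : ℤ) - 1 - (i : ℤ)) + (dS S i : ℤ) - (eS S i : ℤ)

/-!
Read `ℓ_i` as the out-degree of `i` in the tournament on `Fin n` that orients `i → j` for
`i < j`, except that the pairs of `S` are reversed. Landau's inequality says that any `t` vertices
have out-degrees summing to at least `t(t-1)/2`, since each of the `t(t-1)/2` games among them
is won by one of them. If every value below `K` occurs exactly once and `K` occurs `c ≥ 2`
times, the `K + c` vertices with `ℓ_i ≤ K` have out-degrees summing to `K(K-1)/2 + cK`, which is
less than `(K+c)(K+c-1)/2`.
-/

section Counting

variable {α β : Type*}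

theorem card_filter_fst_eq [DecidableEq α] [Fintype β] [DecidableEq β] (S : Finset (α × β))
    (a : α) : #{p ∈ S | p.1 = a} = #{b | (a, b) ∈ S} :=
  card_nbij' Prod.snd (a, ·) (fun p _ => by aesop) (fun b _ => by aesop) (fun p _ => by aesop)
    (fun b _ => rfl)

theorem card_filter_snd_eq [Fintype α] [DecidableEq α] [DecidableEq β] (S : Finset (α × β))
    (b : β) : #{p ∈ S | p.2 = b} = #{a | (a, b) ∈ S} :=
  card_nbij' Prod.fst (·, b) (fun p _ => by aesop) (fun a _ => by aesop) (fun p _ => by aesop)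
    (fun a _ => rfl)

theorem landau_card_mul_card_le [Fintype α] [DecidableEq α] (r : α → α → Prop) [DecidableRel r]
    (hr : ∀ i j, i ≠ j → r i j ∨ r j i) (T : Finset α) :
    #T * #T ≤ 2 * ∑ i ∈ T, #{j | r i j} + #T := by
  set P := (T ×ˢ T).filter (fun p => r p.1 p.2)
  have hP : #P ≤ ∑ i ∈ T, #{j | r i j} := calc
    #P = ∑ i ∈ T, #{j ∈ T | r i j} := by simp only [P, card_filter, sum_product]
    _ ≤ ∑ i ∈ T, #{j | r i j} :=
      sum_le_sum fun i _ => card_le_card (filter_subset_filter _ (subset_univ T))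
  have hcover : T.offDiag ⊆ P ∪ P.image Prod.swap := by
    rintro ⟨i, j⟩ hij
    obtain ⟨hi, hj, hne⟩ := mem_offDiag.mp hij
    rcases hr i j hne with h | h
    · exact mem_union_left _ (mem_filter.mpr ⟨mem_product.mpr ⟨hi, hj⟩, h⟩)
    · exact mem_union_right _
        (mem_image.mpr ⟨(j, i), mem_filter.mpr ⟨mem_product.mpr ⟨hj, hi⟩, h⟩, rfl⟩)
  have hswap : #(P.image Prod.swap) ≤ #P := card_image_le
  have hoff : #T * #T - #T ≤ #P + #(P.image Prod.swap) := by
    rw [← offDiag_card]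
    exact (card_le_card hcover).trans (card_union_le _ _)
  have : #T ≤ #T * #T := Nat.le_mul_self _
  omega

variable [Fintype α] (f : α → ℕ) (K : ℕ)

theorem filter_filter_le_eq {j : ℕ} (hj : j ≤ K) :
    (univ.filter fun i => f i ≤ K).filter (fun i => f i = j) = univ.filter fun i => f i = j := by
  rw [filter_filter]
  exact filter_congr fun i _ => ⟨And.right, fun h => ⟨by omega, h⟩⟩

theorem mem_range_of_mem_filter_le :
    ∀ i ∈ ({i | f i ≤ K} : Finset α), f i ∈ range (K + 1) :=
  fun _ hi => mem_range.mpr (Nat.lt_succ_of_le (mem_filter.mp hi).2)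

theorem card_filter_le_eq_sum :
    #{i | f i ≤ K} = ∑ j ∈ range (K + 1), #{i | f i = j} := by
  rw [card_eq_sum_card_fiberwise (mem_range_of_mem_filter_le f K)]
  exact sum_congr rfl fun j hj =>
    by rw [filter_filter_le_eq f K (Nat.le_of_lt_succ (mem_range.mp hj))]

theorem sum_filter_le_eq_sum :
    ∑ i ∈ {i | f i ≤ K}, f i = ∑ j ∈ range (K + 1), #{i | f i = j} * j := by
  rw [← sum_fiberwise_of_maps_to' (mem_range_of_mem_filter_le f K) (fun j => j)]
  refine sum_congr rfl fun j hj => ?_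
  rw [sum_const, smul_eq_mul, filter_filter_le_eq f K (Nat.le_of_lt_succ (mem_range.mp hj))]

theorem card_fiber_le_one_of_landau (hf : ∀ T : Finset α, #T * #T ≤ 2 * ∑ i ∈ T, f i + #T)
    (hK : ∀ j < K, #{i | f i = j} = 1) : #{i | f i = K} ≤ 1 := by
  set c := #{i | f i = K}
  have hcard : #{i | f i ≤ K} = K + c := by
    rw [card_filter_le_eq_sum, sum_range_succ, sum_congr rfl fun j hj => hK j (mem_range.mp hj)]
    simp [c]
  have hsum : ∑ i ∈ {i | f i ≤ K}, f i = ∑ j ∈ range K, j + c * K := by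
    rw [sum_filter_le_eq_sum, sum_range_succ,
      sum_congr rfl fun j hj => by rw [hK j (mem_range.mp hj), one_mul]]
  have hgauss : (∑ j ∈ range K, j) * 2 + K = K * K := by
    rw [sum_range_id_mul_two, Nat.mul_sub_one]
    have := Nat.le_mul_self K
    omega
  have := hf {i | f i ≤ K}
  rw [hcard, hsum] at this
  nlinarith

end Counting

section Tournament

variable {n : ℕ} (S : Finset (Fin n × Fin n))

def beats (i j : Fin n) : Prop :=
  (i < j ∧ (i, j) ∉ S) ∨ (j < i ∧ (j, i) ∈ S)

instance : DecidableRel (beats S) :=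
  fun _ _ => inferInstanceAs (Decidable (_ ∨ _))

theorem beats_or_beats {i j : Fin n} (hij : i ≠ j) :
    beats S i j ∨ beats S j i := by
  rcases hij.lt_or_gt with h | h
  · by_cases hm : (i, j) ∈ S
    · exact Or.inr (Or.inr ⟨h, hm⟩)
    · exact Or.inl (Or.inl ⟨h, hm⟩)
  · by_cases hm : (j, i) ∈ S
    · exact Or.inl (Or.inr ⟨h, hm⟩)
    · exact Or.inr (Or.inl ⟨h, hm⟩)

theorem card_beats_add_eS (hS : ∀ p ∈ S, p.1 < p.2) (i : Fin n) :
    #{j | beats S i j} + eS S i = (n - 1 - i) + dS S i := by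
  have hsplit : ({j | beats S i j} : Finset _) =
      {j ∈ Ioi i | (i, j) ∉ S} ∪ ({j | (j, i) ∈ S} : Finset _) := by
    ext j
    have := hS (j, i)
    simp only [mem_union, mem_filter, mem_univ, mem_Ioi, true_and]
    unfold beats
    tauto
  have hdisj : Disjoint {j ∈ Ioi i | (i, j) ∉ S} ({j | (j, i) ∈ S} : Finset _) := by
    rw [disjoint_left]
    intro j hj hji
    exact lt_asymm (mem_Ioi.mp (mem_filter.mp hj).1) (hS _ (mem_filter.mp hji).2)
  have hrow : ({j | (i, j) ∈ S} : Finset _) = {j ∈ Ioi i | (i, j) ∈ S} := by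
    ext j
    have := hS (i, j)
    simp only [mem_filter, mem_univ, mem_Ioi, true_and]
    tauto
  have hIoi := card_filter_add_card_filter_not (s := Ioi i) (fun j => (i, j) ∈ S)
  rw [Fin.card_Ioi] at hIoi
  rw [hsplit, card_union_of_disjoint hdisj, eS, dS, card_filter_fst_eq, card_filter_snd_eq, hrow]
  omega

theorem ellS_eq_card_beats (hS : ∀ p ∈ S, p.1 < p.2) (i : Fin n) :
    ellS S i = #{j | beats S i j} := by
  have := card_beats_add_eS S hS i
  have := i.isLt
  unfold ellS
  omega

end Tournament

theorem ell_not_attained_general (n : ℕ) (S : Finset (Fin n × Fin n))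
    (hS : ∀ p ∈ S, p.1 < p.2) (K : ℕ)
    (hK1 : ∀ j : ℕ, j < K →
      (Finset.univ.filter (fun i => ellS S i = (j : ℤ))).card = 1)
    (hK2 : (Finset.univ.filter (fun i => ellS S i = (K : ℤ))).card ≠ 1) :
    (Finset.univ.filter (fun i => ellS S i = (K : ℤ))).card = 0 := by
  simp only [ellS_eq_card_beats S hS, Nat.cast_inj] at hK1 hK2 ⊢
  have := card_fiber_le_one_of_landau (fun i => #{j | beats S i j}) K
    (landau_card_mul_card_le (beats S) fun _ _ => beats_or_beats S) hK1
  omega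

/-- Lemma 3.2: if `K` is the largest nonnegative integer such that every value
`0 ≤ j < K` is attained exactly once among the `ℓ_i`, then no `i` satisfies
`ℓ_i = K`. (The hypotheses express that `K` is such a largest integer.) -/
theorem ell_not_attained (n : ℕ) (hn : 2 ≤ n) (S : Finset (Fin n × Fin n))
    (hS : ∀ p ∈ S, p.1 < p.2) (K : ℕ)
    (hK1 : ∀ j : ℕ, j < K →
      (Finset.univ.filter (fun i => ellS S i = (j : ℤ))).card = 1)
    (hK2 : (Finset.univ.filter (fun i => ellS S i = (K : ℤ))).card ≠ 1) :
    (Finset.univ.filter (fun i => ellS S i = (K : ℤ))).card = 0 :=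
  ell_not_attained_general n S hS K hK1 hK2
end

section
/- Let s₁ = 0, let s₂,…,sₙ,s_{n+1} = s be arbitrary (real or integer) numbers, and for a permutation π ∈ 𝔖ₙ set a_{π(i)} = s_{i+1} − s_i. Define t_i = C(s_i,2) + s_i(s − s_{i+1}) − (n−i)s_i, t_< = ∑_{i<j, π(i)<π(j)} (C(a_{π(i)},2) + (a_{π(i)}+a_{π(j)}−1)s_i) and t_> = ∑_{i<j, π(i)>π(j)} (C(a_{π(i)},2) + (a_{π(i)}+a_{π(j)}−1)s_i). Then t_< + t_> = ∑_{i=1}^n t_i. -/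
open Finset

/-!
Write `bᵢ = s_{i+1} − s_i`. Since `π` is injective, `t_<` and `t_>` together range over all
pairs `i < j`, and `π` drops out. The summand splits as `C(bᵢ,2) + (bᵢ − 1) sᵢ + bⱼ sᵢ`; summed
over `j > i`, the last part telescopes to `sᵢ (s − s_{i+1})`, while
`C(bᵢ,2) + bᵢ sᵢ = C(s_{i+1},2) − C(sᵢ,2)`. What remains is the summation by parts
`∑ᵢ (n−1−i)(C(s_{i+1},2) − C(sᵢ,2)) = ∑ᵢ C(sᵢ,2) − n C(s₁,2)`, whose boundary term vanishes
because `s₁ = 0`.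
-/

/-- The paper's `C(x,2)`. -/
def ch2 (x : ℚ) : ℚ := x * (x - 1) / 2

theorem sum_noninversions_add_sum_inversions {α β M : Type*} [Fintype α] [LinearOrder α]
    [LinearOrder β] [AddCommMonoid M] {σ : α → β} (hσ : Function.Injective σ)
    (f : α × α → M) :
    ∑ p ∈ univ.filter (fun p : α × α => p.1 < p.2 ∧ σ p.1 < σ p.2), f p
      + ∑ p ∈ univ.filter (fun p : α × α => p.1 < p.2 ∧ σ p.2 < σ p.1), f p
      = ∑ p ∈ univ.filter (fun p : α × α => p.1 < p.2), f p := by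
  rw [← sum_filter_add_sum_filter_not (univ.filter fun p : α × α => p.1 < p.2)
    (fun p => σ p.1 < σ p.2), filter_filter, filter_filter]
  congr 2
  refine filter_congr fun p _ => and_congr_right fun hlt => ?_
  exact ⟨fun h => not_lt.mpr h.le, fun h => (not_lt.mp h).lt_of_ne' (hσ.ne hlt.ne)⟩

theorem sum_filter_fst_lt_snd {α M : Type*} [Fintype α] [LinearOrder α]
    [LocallyFiniteOrderTop α] [AddCommMonoid M] (f : α × α → M) :
    ∑ p ∈ univ.filter (fun p : α × α => p.1 < p.2), f p = ∑ i, ∑ j ∈ Ioi i, f (i, j) := by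
  rw [sum_filter, Fintype.sum_prod_type]
  refine sum_congr rfl fun i _ => ?_
  rw [← sum_filter, filter_lt_eq_Ioi]

namespace Fin

variable {M : Type*} [AddCommGroup M] {n : ℕ}

theorem sum_univ_succ_sub_castSucc (f : Fin (n + 1) → M) :
    ∑ i : Fin n, (f i.succ - f i.castSucc) = f (last n) - f 0 := by
  have hsum := (sum_univ_succ f).symm.trans (sum_univ_castSucc f)
  rw [sum_sub_distrib, sub_eq_sub_iff_add_eq_add, add_comm, hsum, add_comm]

theorem sum_Ioi_succ_sub_castSucc (f : Fin (n + 1) → M) (i : Fin n) :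
    ∑ j ∈ Ioi i, (f j.succ - f j.castSucc) = f (last n) - f i.succ := by
  have hcompl : (Iic i)ᶜ = Ioi i := by ext; simp
  have hsplit := sum_compl_add_sum (Iic i) fun j => f j.succ - f j.castSucc
  rw [hcompl, sum_univ_succ_sub_castSucc, sum_Iic_sub] at hsplit
  exact eq_sub_of_add_eq hsplit |>.trans (sub_sub_sub_cancel_right _ _ _)

theorem sum_mul_succ_sub_castSucc {R : Type*} [CommRing R] (c : Fin (n + 1) → R) :
    ∑ i : Fin n, ((n : R) - 1 - i) * (c i.succ - c i.castSucc)
      = ∑ i : Fin n, c i.castSucc - n * c 0 := by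
  have hterm : ∀ i : Fin n, ((n : R) - 1 - i) * (c i.succ - c i.castSucc)
      = (((n : R) - (i.succ : ℕ)) * c i.succ - ((n : R) - (i.castSucc : ℕ)) * c i.castSucc)
        + c i.castSucc := by
    intro i
    simp only [val_succ, val_castSucc, Nat.cast_add, Nat.cast_one]
    ring
  rw [sum_congr rfl fun i _ => hterm i, sum_add_distrib,
    sum_univ_succ_sub_castSucc (fun k : Fin (n + 1) => ((n : R) - (k : ℕ)) * c k)]
  simp only [val_last, sub_self, zero_mul, val_zero, Nat.cast_zero, sub_zero, zero_sub]
  abel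

end Fin

theorem sum_Ioi_pair_summand (n : ℕ) (s : Fin (n + 1) → ℚ) (i : Fin n) :
    ∑ j ∈ Ioi i, (ch2 (s i.succ - s i.castSucc)
        + ((s i.succ - s i.castSucc) + (s j.succ - s j.castSucc) - 1) * s i.castSucc)
      = ((n : ℚ) - 1 - i) * (ch2 (s i.succ) - ch2 (s i.castSucc) - s i.castSucc)
        + s i.castSucc * (s (Fin.last n) - s i.succ) := by
  have hterm : ∀ j : Fin n, ch2 (s i.succ - s i.castSucc)
      + ((s i.succ - s i.castSucc) + (s j.succ - s j.castSucc) - 1) * s i.castSucc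
      = (ch2 (s i.succ) - ch2 (s i.castSucc) - s i.castSucc)
        + (s j.succ - s j.castSucc) * s i.castSucc := by
    intro j
    simp only [ch2]
    ring
  have hcard : ((#(Ioi i) : ℕ) : ℚ) = (n : ℚ) - 1 - i := by
    rw [Fin.card_Ioi, Nat.sub_sub, Nat.cast_sub (by omega)]
    push_cast
    ring
  rw [sum_congr rfl fun j _ => hterm j, sum_add_distrib, sum_const, nsmul_eq_mul, hcard,
    ← sum_mul, Fin.sum_Ioi_succ_sub_castSucc, mul_comm (s (Fin.last n) - _)]

/-- Indices are shifted down by one: `s 0` is the paper's `s₁`, `s (Fin.last n)` its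
`s = s_{n+1}`, and `tᵢ` carries the coefficient `n − 1 − i` in place of `n − i`. -/
theorem t_sum_identity (n : ℕ) (s : Fin (n + 1) → ℚ) (h0 : s 0 = 0)
    (π : Equiv.Perm (Fin n)) (a : Fin n → ℚ)
    (ha : ∀ i : Fin n, a (π i) = s i.succ - s i.castSucc) :
    (∑ p ∈ Finset.univ.filter
        (fun p : Fin n × Fin n => p.1 < p.2 ∧ π p.1 < π p.2),
        (ch2 (a (π p.1)) + (a (π p.1) + a (π p.2) - 1) * s p.1.castSucc))
    + (∑ p ∈ Finset.univ.filter
        (fun p : Fin n × Fin n => p.1 < p.2 ∧ π p.2 < π p.1),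
        (ch2 (a (π p.1)) + (a (π p.1) + a (π p.2) - 1) * s p.1.castSucc))
    = ∑ i : Fin n,
        (ch2 (s i.castSucc) + s i.castSucc * (s (Fin.last n) - s i.succ)
          - ((n : ℚ) - 1 - (i : ℕ)) * s i.castSucc) := by
  rw [sum_noninversions_add_sum_inversions π.injective, sum_filter_fst_lt_snd]
  simp only [ha, sum_Ioi_pair_summand]
  have hterm : ∀ i : Fin n,
      ((n : ℚ) - 1 - i) * (ch2 (s i.succ) - ch2 (s i.castSucc) - s i.castSucc)
        + s i.castSucc * (s (Fin.last n) - s i.succ)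
      = (ch2 (s i.castSucc) + s i.castSucc * (s (Fin.last n) - s i.succ)
          - ((n : ℚ) - 1 - i) * s i.castSucc)
        + (((n : ℚ) - 1 - i) * (ch2 (s i.succ) - ch2 (s i.castSucc)) - ch2 (s i.castSucc)) := by
    intro i
    ring
  have hboundary : ∑ i : Fin n,
      (((n : ℚ) - 1 - i) * (ch2 (s i.succ) - ch2 (s i.castSucc)) - ch2 (s i.castSucc)) = 0 := by
    rw [sum_sub_distrib, Fin.sum_mul_succ_sub_castSucc (fun k => ch2 (s k)), h0]
    simp [ch2]
  rw [sum_congr rfl fun i _ => hterm i, sum_add_distrib, hboundary, add_zero]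
end
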